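/- arXiv:2112.10248 — 2 statements merged into one kernel-verified Lean document; each statement's English description precedes it below -/
import Mathlib

section
/- Let X_1, …, X_K be independent Pareto(γ) random variables, γ > 0, and let a_1, …, a_K ≥ 0 and b_1, …, b_K ≥ 0 be two weight vectors satisfying Σ_{k=1}^K a_k^γ = Σ_{k=1}^K b_k^γ > 0. Then lim_{r→∞} P(Σ_{k=1}^K a_k X_k > r) / P(Σ_{k=1}^K b_k X_k > r) = 1 (marginal tail-stationarity). -/
open MeasureTheory ProbabilityTheory Filter
open scoped Topology

/-! The tail of a nonnegative combination `∑ cᵢ Xᵢ` of independent Pareto(γ) variables is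
asymptotically `(∑ cᵢ ^ γ) r ^ (-γ)`, so the two probabilities in the ratio are asymptotic to the
same multiple of `r ^ (-γ)`. Write `p x = ∑ᵢ P(x < cᵢ Xᵢ)`, which equals `(∑ cᵢ ^ γ) x ^ (-γ)` for
large `x`. The sum exceeds `r` as soon as one summand does, and by independence that union has
probability at least `p r - (p r) ^ 2`. Conversely, if the sum exceeds `r` then either one summand
exceeds `(1 - δ) r` or two distinct summands exceed `t = δ r / (K + 1)`, an event of probability
at most `p ((1 - δ) r) + (p t) ^ 2`. Multiplying by `r ^ γ`, the correction terms vanish as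
`r → ∞`, and the main terms tend to `∑ cᵢ ^ γ` and `(1 - δ) ^ (-γ) ∑ cᵢ ^ γ`, with `δ` arbitrary. -/

theorem Finset.prod_one_sub_le_one_sub_sum_add_sq {ι : Type*} (s : Finset ι) {q : ι → ℝ}
    (h0 : ∀ i ∈ s, 0 ≤ q i) (h1 : ∀ i ∈ s, q i ≤ 1) :
    ∏ i ∈ s, (1 - q i) ≤ 1 - ∑ i ∈ s, q i + (∑ i ∈ s, q i) ^ 2 := by
  classical
  induction s using Finset.induction_on with
  | empty => simp
  | insert a s ha ih =>
    simp only [Finset.mem_insert, forall_eq_or_imp] at h0 h1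
    rw [Finset.prod_insert ha, Finset.sum_insert ha]
    have hS : 0 ≤ ∑ i ∈ s, q i := Finset.sum_nonneg h0.2
    have ih := mul_le_mul_of_nonneg_left (ih h0.2 h1.2) (sub_nonneg.2 h1.1)
    nlinarith [mul_nonneg h0.1 hS, mul_nonneg h0.1 (sq_nonneg (∑ i ∈ s, q i))]

theorem sum_le_of_le_of_at_most_one_gt {ι : Type*} [Fintype ι] {y : ι → ℝ} {r s t : ℝ}
    (hs : 0 ≤ s) (ht : 0 ≤ t) (hr : s + Fintype.card ι * t ≤ r) (hy : ∀ i, y i ≤ s)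
    (hpair : ∀ i j, t < y i → t < y j → i = j) : ∑ i, y i ≤ r := by
  classical
  set S := Finset.univ.filter fun i => t < y i
  have hS : S.card ≤ 1 := Finset.card_le_one.2 fun i hi j hj =>
    hpair i j (Finset.mem_filter.1 hi).2 (Finset.mem_filter.1 hj).2
  have hbound : ∀ i, y i ≤ t + if t < y i then s else 0 := fun i => by
    split_ifs with h
    · linarith [hy i]
    · simpa using not_lt.1 h
  calc ∑ i, y i ≤ ∑ i, (t + if t < y i then s else 0) := Finset.sum_le_sum fun i _ => hbound i
    _ = Fintype.card ι * t + S.card * s := by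
      rw [Finset.sum_add_distrib, ← Finset.sum_filter]; simp [S, mul_comm]
    _ ≤ r := by nlinarith [show (S.card : ℝ) ≤ 1 by exact_mod_cast hS]

section TailAsymptotics

variable {Ω ι : Type*} [MeasurableSpace Ω] {P : Measure Ω} [Fintype ι]

section ParetoTail

variable {Y : Ω → ℝ} {γ : ℝ}

theorem measureReal_const_mul_gt_eq (hγ : 0 < γ)
    (htail : ∀ x : ℝ, 1 ≤ x → P.real {ω | x < Y ω} = x ^ (-γ)) {c x : ℝ} (hc : 0 ≤ c)
    (hx : 0 < x) (hcx : c ≤ x) : P.real {ω | x < c * Y ω} = c ^ γ * x ^ (-γ) := by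
  rcases hc.eq_or_lt with rfl | hc
  · simp [Real.zero_rpow hγ.ne', hx.not_gt]
  · have hset : {ω | x < c * Y ω} = {ω | x / c < Y ω} := by
      ext ω; simp [div_lt_iff₀ hc, mul_comm]
    rw [hset, htail _ ((one_le_div hc).2 hcx), Real.div_rpow hx.le hc.le, Real.rpow_neg hc.le,
      div_inv_eq_mul, mul_comm]

theorem tendsto_measureReal_const_mul_gt_nhds_zero (hγ : 0 < γ)
    (htail : ∀ x : ℝ, 1 ≤ x → P.real {ω | x < Y ω} = x ^ (-γ)) {c : ℝ} (hc : 0 ≤ c) :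
    Tendsto (fun x => P.real {ω | x < c * Y ω}) atTop (𝓝 0) := by
  have h := (tendsto_rpow_neg_atTop hγ).const_mul (c ^ γ)
  rw [mul_zero] at h
  refine h.congr' ?_
  filter_upwards [eventually_gt_atTop 0, eventually_ge_atTop c] with x hx hcx
  exact (measureReal_const_mul_gt_eq hγ htail hc hx hcx).symm

theorem tendsto_measureReal_const_mul_gt_mul_rpow (hγ : 0 < γ)
    (htail : ∀ x : ℝ, 1 ≤ x → P.real {ω | x < Y ω} = x ^ (-γ)) {c κ : ℝ} (hc : 0 ≤ c)
    (hκ : 0 < κ) :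
    Tendsto (fun r => P.real {ω | κ * r < c * Y ω} * r ^ γ) atTop (𝓝 (c ^ γ * κ ^ (-γ))) := by
  refine tendsto_const_nhds.congr' ?_
  filter_upwards [eventually_gt_atTop 0,
    (tendsto_id.const_mul_atTop hκ).eventually_ge_atTop c] with r hr (hcr : c ≤ κ * r)
  rw [measureReal_const_mul_gt_eq hγ htail hc (by positivity) hcr,
    Real.mul_rpow hκ.le hr.le, Real.rpow_neg hr.le]
  field_simp [(Real.rpow_pos_of_pos hr γ).ne']

theorem ae_one_lt_of_measureReal_gt_eq_rpow [IsProbabilityMeasure P] (hmeas : Measurable Y)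
    (htail : ∀ x : ℝ, 1 ≤ x → P.real {ω | x < Y ω} = x ^ (-γ)) : ∀ᵐ ω ∂P, 1 < Y ω := by
  refine (mem_ae_iff_prob_eq_one (measurableSet_lt measurable_const hmeas)).2 ?_
  rw [← ENNReal.toReal_eq_one_iff, ← measureReal_def, htail 1 le_rfl, Real.one_rpow]

end ParetoTail

variable {X : ι → Ω → ℝ} {γ : ℝ} {c : ι → ℝ}

theorem tendsto_sum_measureReal_gt_nhds_zero (hγ : 0 < γ)
    (htail : ∀ i, ∀ x : ℝ, 1 ≤ x → P.real {ω | x < X i ω} = x ^ (-γ)) (hc : ∀ i, 0 ≤ c i) :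
    Tendsto (fun x => ∑ i, P.real {ω | x < c i * X i ω}) atTop (𝓝 0) := by
  simpa using tendsto_finsetSum Finset.univ fun i _ =>
    tendsto_measureReal_const_mul_gt_nhds_zero hγ (htail i) (hc i)

theorem tendsto_sum_measureReal_gt_mul_rpow (hγ : 0 < γ)
    (htail : ∀ i, ∀ x : ℝ, 1 ≤ x → P.real {ω | x < X i ω} = x ^ (-γ)) (hc : ∀ i, 0 ≤ c i)
    {κ : ℝ} (hκ : 0 < κ) :
    Tendsto (fun r => (∑ i, P.real {ω | κ * r < c i * X i ω}) * r ^ γ) atTop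
      (𝓝 ((∑ i, c i ^ γ) * κ ^ (-γ))) := by
  simpa only [Finset.sum_mul] using tendsto_finsetSum Finset.univ fun i _ =>
    tendsto_measureReal_const_mul_gt_mul_rpow hγ (htail i) (hc i) hκ

variable [IsProbabilityMeasure P]

theorem ProbabilityTheory.iIndepFun.measureReal_iUnion_preimage {β : Type*} [MeasurableSpace β]
    {Y : ι → Ω → β} (hY : iIndepFun Y P) (hmeas : ∀ i, Measurable (Y i)) {B : ι → Set β}
    (hB : ∀ i, MeasurableSet (B i)) :
    P.real (⋃ i, Y i ⁻¹' B i) = 1 - ∏ i, (1 - P.real (Y i ⁻¹' B i)) := by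
  have hinter : P (⋂ i, Y i ⁻¹' (B i)ᶜ) = ∏ i, P (Y i ⁻¹' (B i)ᶜ) := by
    simpa using hY.measure_inter_preimage_eq_mul Finset.univ fun i _ => (hB i).compl
  rw [← compl_compl (⋃ i, _), probReal_compl_eq_one_sub
    (MeasurableSet.iUnion fun i => hmeas i (hB i)).compl, Set.compl_iUnion]
  simp only [← Set.preimage_compl, measureReal_def, hinter, ENNReal.toReal_prod]
  congr 2 with i
  rw [← measureReal_def, Set.preimage_compl, probReal_compl_eq_one_sub (hmeas i (hB i)),
    measureReal_def]

theorem ProbabilityTheory.iIndepFun.measureReal_exists_pair_gt_le {Y : ι → Ω → ℝ}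
    (hY : iIndepFun Y P) (t : ℝ) :
    P.real {ω | ∃ i j, i ≠ j ∧ t < Y i ω ∧ t < Y j ω} ≤ (∑ i, P.real {ω | t < Y i ω}) ^ 2 := by
  classical
  set A : ι → Set Ω := fun i => {ω | t < Y i ω}
  have hpair : ∀ p ∈ (Finset.univ : Finset ι).offDiag,
      P.real (A p.1 ∩ A p.2) = P.real (A p.1) * P.real (A p.2) := fun p hp => by
    have h := (hY.indepFun (Finset.mem_offDiag.1 hp).2.2).measure_inter_preimage_eq_mul
      (Set.Ioi t) (Set.Ioi t) measurableSet_Ioi measurableSet_Ioi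
    simp only [measureReal_def, ← ENNReal.toReal_mul]
    exact congrArg ENNReal.toReal h
  calc P.real {ω | ∃ i j, i ≠ j ∧ t < Y i ω ∧ t < Y j ω}
      ≤ P.real (⋃ p ∈ (Finset.univ : Finset ι).offDiag, A p.1 ∩ A p.2) := by
        refine measureReal_mono (fun ω ⟨i, j, hij, hi, hj⟩ => ?_) (measure_ne_top _ _)
        exact Set.mem_biUnion (x := (i, j)) (by simpa using hij) ⟨hi, hj⟩
    _ ≤ ∑ p ∈ (Finset.univ : Finset ι).offDiag, P.real (A p.1 ∩ A p.2) :=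
        measureReal_biUnion_finset_le _ _
    _ = ∑ p ∈ (Finset.univ : Finset ι).offDiag, P.real (A p.1) * P.real (A p.2) :=
        Finset.sum_congr rfl hpair
    _ ≤ ∑ p : ι × ι, P.real (A p.1) * P.real (A p.2) :=
        Finset.sum_le_sum_of_subset_of_nonneg (Finset.subset_univ _) fun _ _ _ => by positivity
    _ = (∑ i, P.real (A i)) ^ 2 := by rw [Fintype.sum_prod_type, sq, Finset.sum_mul_sum]

theorem ProbabilityTheory.iIndepFun.sum_sub_sq_le_measureReal_sum_gt {Y : ι → Ω → ℝ}
    (hY : iIndepFun Y P) (hmeas : ∀ i, Measurable (Y i)) (hnonneg : ∀ i, 0 ≤ᵐ[P] Y i) (r : ℝ) :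
    ∑ i, P.real {ω | r < Y i ω} - (∑ i, P.real {ω | r < Y i ω}) ^ 2
      ≤ P.real {ω | r < ∑ i, Y i ω} := by
  have hunion : P.real (⋃ i, Y i ⁻¹' Set.Ioi r) ≤ P.real {ω | r < ∑ i, Y i ω} := by
    refine ENNReal.toReal_mono (measure_ne_top _ _) (measure_mono_ae ?_)
    filter_upwards [ae_all_iff.2 hnonneg] with ω hω hmem
    obtain ⟨i, hi⟩ := Set.mem_iUnion.1 hmem
    exact lt_of_lt_of_le hi (Finset.single_le_sum (fun j _ => hω j) (Finset.mem_univ i))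
  rw [hY.measureReal_iUnion_preimage hmeas fun _ => measurableSet_Ioi] at hunion
  change 1 - ∏ i, (1 - P.real {ω | r < Y i ω}) ≤ _ at hunion
  have hprod := Finset.univ.prod_one_sub_le_one_sub_sum_add_sq
    (q := fun i => P.real {ω | r < Y i ω}) (fun _ _ => measureReal_nonneg)
    (fun _ _ => measureReal_le_one)
  exact le_trans (by linarith) hunion

theorem ProbabilityTheory.iIndepFun.measureReal_sum_gt_le {Y : ι → Ω → ℝ}
    (hY : iIndepFun Y P) {r s t : ℝ} (hs : 0 ≤ s) (ht : 0 ≤ t)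
    (hr : s + Fintype.card ι * t ≤ r) :
    P.real {ω | r < ∑ i, Y i ω}
      ≤ ∑ i, P.real {ω | s < Y i ω} + (∑ i, P.real {ω | t < Y i ω}) ^ 2 := by
  have hsub : {ω | r < ∑ i, Y i ω}
      ⊆ (⋃ i, {ω | s < Y i ω}) ∪ {ω | ∃ i j, i ≠ j ∧ t < Y i ω ∧ t < Y j ω} := by
    intro ω hω
    by_contra hnot
    simp only [Set.mem_union, Set.mem_iUnion, Set.mem_ofPred_eq, not_or, not_exists, not_lt,
      not_and] at hnot
    refine (sum_le_of_le_of_at_most_one_gt hs ht hr hnot.1 fun i j hi hj => ?_).not_gt hω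
    by_contra hij
    exact (hnot.2 i j hij hi).not_gt hj
  calc P.real {ω | r < ∑ i, Y i ω}
      ≤ P.real (⋃ i, {ω | s < Y i ω}) + P.real {ω | ∃ i j, i ≠ j ∧ t < Y i ω ∧ t < Y j ω} :=
        (measureReal_mono hsub (measure_ne_top _ _)).trans (measureReal_union_le _ _)
    _ ≤ _ := add_le_add (measureReal_iUnion_fintype_le _) (hY.measureReal_exists_pair_gt_le t)

theorem eventually_lt_measureReal_sum_gt_mul_rpow (hγ : 0 < γ)
    (hmeas : ∀ i, Measurable (X i)) (hindep : iIndepFun X P)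
    (htail : ∀ i, ∀ x : ℝ, 1 ≤ x → P.real {ω | x < X i ω} = x ^ (-γ)) (hc : ∀ i, 0 ≤ c i)
    {a : ℝ} (ha : a < ∑ i, c i ^ γ) :
    ∀ᶠ r in atTop, a < P.real {ω | r < ∑ i, c i * X i ω} * r ^ γ := by
  set p : ℝ → ℝ := fun x => ∑ i, P.real {ω | x < c i * X i ω}
  have hlim : Tendsto (fun r => p (1 * r) * r ^ γ * (1 - p r)) atTop
      (𝓝 ((∑ i, c i ^ γ) * 1 ^ (-γ) * (1 - 0))) :=
    (tendsto_sum_measureReal_gt_mul_rpow hγ htail hc one_pos).mul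
      (tendsto_const_nhds.sub (tendsto_sum_measureReal_gt_nhds_zero hγ htail hc))
  simp only [Real.one_rpow, one_mul, sub_zero, mul_one] at hlim
  have hnonneg : ∀ i, 0 ≤ᵐ[P] fun ω => c i * X i ω := fun i => by
    filter_upwards [ae_one_lt_of_measureReal_gt_eq_rpow (hmeas i) (htail i)] with ω hω
    exact mul_nonneg (hc i) (zero_le_one.trans hω.le)
  have hY : iIndepFun (fun i ω => c i * X i ω) P :=
    hindep.comp (fun i x => c i * x) fun i => measurable_const_mul (c i)
  filter_upwards [hlim.eventually (lt_mem_nhds ha), eventually_gt_atTop 0] with r har hr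
  calc a < p r * r ^ γ * (1 - p r) := har
    _ = (p r - p r ^ 2) * r ^ γ := by ring
    _ ≤ _ := mul_le_mul_of_nonneg_right
        (hY.sum_sub_sq_le_measureReal_sum_gt (fun i => (hmeas i).const_mul (c i)) hnonneg r)
        (Real.rpow_nonneg hr.le γ)

theorem eventually_measureReal_sum_gt_mul_rpow_lt (hγ : 0 < γ) (hindep : iIndepFun X P)
    (htail : ∀ i, ∀ x : ℝ, 1 ≤ x → P.real {ω | x < X i ω} = x ^ (-γ)) (hc : ∀ i, 0 ≤ c i)
    {b : ℝ} (hb : ∑ i, c i ^ γ < b) :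
    ∀ᶠ r in atTop, P.real {ω | r < ∑ i, c i * X i ω} * r ^ γ < b := by
  set S := ∑ i, c i ^ γ
  set p : ℝ → ℝ := fun x => ∑ i, P.real {ω | x < c i * X i ω}
  have hcont : Tendsto (fun δ : ℝ => S * (1 - δ) ^ (-γ)) (𝓝[>] 0) (𝓝 S) := by
    have h : ContinuousAt (fun δ : ℝ => S * (1 - δ) ^ (-γ)) 0 :=
      ((continuous_const.sub continuous_id).continuousAt.rpow_const
        (Or.inl (by norm_num))).const_mul S
    simpa using h.tendsto.mono_left nhdsWithin_le_nhds
  obtain ⟨δ, hδb, hδ0, hδ1⟩ :=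
    ((hcont.eventually (gt_mem_nhds hb)).and (Ioo_mem_nhdsGT one_pos)).exists
  set κ := δ / (Fintype.card ι + 1)
  have hκ : 0 < κ := by positivity
  have hcardκ : Fintype.card ι * κ ≤ δ := by
    rw [mul_div_assoc', div_le_iff₀ (by positivity)]
    nlinarith
  have hlim : Tendsto (fun r => p ((1 - δ) * r) * r ^ γ + p (κ * r) * r ^ γ * p (κ * r)) atTop
      (𝓝 (S * (1 - δ) ^ (-γ) + S * κ ^ (-γ) * 0)) :=
    (tendsto_sum_measureReal_gt_mul_rpow hγ htail hc (sub_pos.2 hδ1)).add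
      ((tendsto_sum_measureReal_gt_mul_rpow hγ htail hc hκ).mul
        ((tendsto_sum_measureReal_gt_nhds_zero hγ htail hc).comp
          (tendsto_id.const_mul_atTop hκ)))
  rw [mul_zero, add_zero] at hlim
  have hY : iIndepFun (fun i ω => c i * X i ω) P :=
    hindep.comp (fun i x => c i * x) fun i => measurable_const_mul (c i)
  filter_upwards [hlim.eventually (gt_mem_nhds hδb), eventually_gt_atTop 0] with r hrb hr
  calc P.real {ω | r < ∑ i, c i * X i ω} * r ^ γ
      ≤ (p ((1 - δ) * r) + p (κ * r) ^ 2) * r ^ γ := by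
        refine mul_le_mul_of_nonneg_right ?_ (Real.rpow_nonneg hr.le γ)
        refine hY.measureReal_sum_gt_le ?_ ?_ ?_
        · exact mul_nonneg (sub_pos.2 hδ1).le hr.le
        · exact mul_nonneg hκ.le hr.le
        · nlinarith
    _ = p ((1 - δ) * r) * r ^ γ + p (κ * r) * r ^ γ * p (κ * r) := by ring
    _ < b := hrb

theorem tendsto_measureReal_sum_gt_mul_rpow (hγ : 0 < γ)
    (hmeas : ∀ i, Measurable (X i)) (hindep : iIndepFun X P)
    (htail : ∀ i, ∀ x : ℝ, 1 ≤ x → P.real {ω | x < X i ω} = x ^ (-γ)) (hc : ∀ i, 0 ≤ c i) :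
    Tendsto (fun r => P.real {ω | r < ∑ i, c i * X i ω} * r ^ γ) atTop
      (𝓝 (∑ i, c i ^ γ)) :=
  tendsto_order.2
    ⟨fun _ ha => eventually_lt_measureReal_sum_gt_mul_rpow hγ hmeas hindep htail hc ha,
      fun _ hb => eventually_measureReal_sum_gt_mul_rpow_lt hγ hindep htail hc hb⟩

end TailAsymptotics

theorem marginal_tail_stationarity_general
    {Ω : Type*} [MeasurableSpace Ω] (P : Measure Ω) [IsProbabilityMeasure P]
    (K : ℕ) (γ : ℝ) (hγ : 0 < γ) (X : Fin K → Ω → ℝ)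
    (hmeas : ∀ k, Measurable (X k))
    (hindep : iIndepFun X P)
    (htail : ∀ k, ∀ x : ℝ, 1 ≤ x → (P {ω | x < X k ω}).toReal = x ^ (-γ))
    (a b : Fin K → ℝ) (ha : ∀ k, 0 ≤ a k) (hb : ∀ k, 0 ≤ b k)
    (hab : ∑ k, (a k) ^ γ = ∑ k, (b k) ^ γ) (hpos : 0 < ∑ k, (b k) ^ γ) :
    Tendsto (fun r : ℝ =>
        (P {ω | r < ∑ k, a k * X k ω}).toReal / (P {ω | r < ∑ k, b k * X k ω}).toReal)
      atTop (nhds 1) := by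
  have hq := (tendsto_measureReal_sum_gt_mul_rpow hγ hmeas hindep htail ha).div
    (tendsto_measureReal_sum_gt_mul_rpow hγ hmeas hindep htail hb) hpos.ne'
  rw [hab, div_self hpos.ne'] at hq
  refine hq.congr' ?_
  filter_upwards [eventually_gt_atTop 0] with r hr
  exact mul_div_mul_right _ _ (Real.rpow_pos_of_pos hr γ).ne'

/-- (Marginal tail-stationarity, corollary to Proposition 1.)
If `X 1, …, X K` are independent Pareto(γ) random variables (γ > 0) and the nonnegative
weight vectors `a`, `b` satisfy `∑ k, (a k)^γ = ∑ k, (b k)^γ > 0`, then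
`P(∑ k, a k * X k > r) / P(∑ k, b k * X k > r) → 1` as `r → ∞`. -/
theorem marginal_tail_stationarity
    {Ω : Type*} [MeasurableSpace Ω] (P : Measure Ω) [IsProbabilityMeasure P]
    (K : ℕ) (γ : ℝ) (hγ : 0 < γ) (X : Fin K → Ω → ℝ)
    (hmeas : ∀ k, Measurable (X k))
    (hindep : iIndepFun X P)
    (htail : ∀ k, ∀ x : ℝ, 1 ≤ x → (P {ω | x < X k ω}).toReal = x ^ (-γ))
    (hlow : ∀ k, ∀ x : ℝ, x < 1 → (P {ω | x < X k ω}).toReal = 1)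
    (a b : Fin K → ℝ) (ha : ∀ k, 0 ≤ a k) (hb : ∀ k, 0 ≤ b k)
    (hab : ∑ k, (a k) ^ γ = ∑ k, (b k) ^ γ) (hpos : 0 < ∑ k, (b k) ^ γ) :
    Tendsto (fun r : ℝ =>
        (P {ω | r < ∑ k, a k * X k ω}).toReal / (P {ω | r < ∑ k, b k * X k ω}).toReal)
      atTop (nhds 1) :=
  marginal_tail_stationarity_general P K γ hγ X hmeas hindep htail a b ha hb hab hpos
end

section
/- Let Z_1 and Z_0 be independent standard normal random variables and, for ρ ∈ (−1, 1), set Z_2 = ρ Z_1 + √(1 − ρ²) Z_0, so that (Z_1, Z_2) is bivariate standard Gaussian with correlation ρ. Let R be a Pareto(γ) random variable, γ > 0, independent of (Z_1, Z_0), and set W_i = R·Z_i for i = 1, 2. Then lim_{x→∞} P(W_1 > x and W_2 > x) / P(W_2 > x) = 2·T̄_{γ+1}( [(γ + 1)(1 − ρ)/(1 + ρ)]^{1/2} ). -/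
open MeasureTheory ProbabilityTheory Filter

/-- The density of Student's t distribution with `d` degrees of freedom. -/
noncomputable def studentTPdf (d u : ℝ) : ℝ :=
  Real.Gamma ((d + 1) / 2) / (Real.sqrt (d * Real.pi) * Real.Gamma (d / 2)) *
    (1 + u ^ 2 / d) ^ (-((d + 1) / 2))

/-- The survival function `T̄_d(x) = ∫_x^∞ t_d(u) du` of Student's t distribution
with `d` degrees of freedom. -/
noncomputable def studentTSurvival (d x : ℝ) : ℝ :=
  ∫ u in Set.Ioi x, studentTPdf d u

/-!
For `x ≥ 1` and `V` independent of the Pareto variable `R`, conditioning on `V` gives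
`P(R V > x) = x^{-γ} E[min(V⁺, x)^γ]`, so tail ratios of `R V` and `R V'` tend to
`E[(V⁺)^γ] / E[(V'⁺)^γ]`. Since `R > 0`, `{W₁ > x, W₂ > x} = {R min(Z₁, Z₂) > x}`.

Given `Z₁ = z`, `Z₂ ~ N(ρz, 1 - ρ²)`, and the joint density of `(Z₁, Z₂)` is symmetric, so
`E[(min(Z₁, Z₂)⁺)^γ] = 2 E[(Z₁⁺)^γ; Z₁ < Z₂] = 2 E[(Z⁺)^γ Φ̄(aZ)]` with `a = (1 - ρ)/√(1 - ρ²)`.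
Writing `Φ̄(az) = z ∫_a^∞ φ(zt) dt` and integrating out `z` first turns this into a Gamma
constant times `∫_a^∞ (1 + t²)^{-(γ+2)/2} dt`, that is, `E[(Z⁺)^γ] T̄_{γ+1}(√(γ+1) a)`.
-/

open Set Real Topology
open scoped ENNReal NNReal

lemma tendsto_lintegral_min_rpow {ν : Measure ℝ} {γ : ℝ} (hγ : 0 ≤ γ)
    (hfin : ∫⁻ z, ENNReal.ofReal (max z 0 ^ γ) ∂ν ≠ ∞) :
    Tendsto (fun x : ℝ => ∫⁻ z, ENNReal.ofReal (min (max z 0) x ^ γ) ∂ν) atTop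
      (𝓝 (∫⁻ z, ENNReal.ofReal (max z 0 ^ γ) ∂ν)) := by
  refine tendsto_lintegral_filter_of_dominated_convergence _
    (Eventually.of_forall fun x => by fun_prop) ?_ hfin ?_
  · filter_upwards [eventually_ge_atTop 0] with x hx
    exact ae_of_all _ fun z => ENNReal.ofReal_le_ofReal
      (rpow_le_rpow (le_min (le_max_right z 0) hx) (min_le_left _ _) hγ)
  · refine ae_of_all _ fun z => tendsto_const_nhds.congr' ?_
    filter_upwards [eventually_ge_atTop (max z 0)] with x hx
    rw [min_eq_left hx]

section Pareto

variable {Ω : Type*} [MeasurableSpace Ω] {P : Measure Ω} {R : Ω → ℝ} {γ : ℝ}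

lemma measure_lt_mul_and_lt_mul_eq_measure_lt_mul_min (hR : ∀ᵐ ω ∂P, 0 < R ω) (A B : Ω → ℝ)
    (x : ℝ) : P {ω | x < R ω * A ω ∧ x < R ω * B ω} = P {ω | x < R ω * min (A ω) (B ω)} := by
  refine measure_congr (eventuallyEq_set.2 ?_)
  filter_upwards [hR] with ω hω
  rw [mul_min_of_nonneg _ _ hω.le, lt_min_iff]

variable [IsProbabilityMeasure P]

lemma ae_pos_of_pareto (hR : Measurable R)
    (hRlow : ∀ x : ℝ, x < 1 → (P {ω | x < R ω}).toReal = 1) : ∀ᵐ ω ∂P, 0 < R ω :=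
  ae_iff.2 <| (prob_compl_eq_zero_iff (measurableSet_lt measurable_const hR)).2
    ((ENNReal.toReal_eq_one_iff _).1 (hRlow 0 one_pos))

lemma measure_lt_mul_const_of_pareto (hγ : 0 < γ) (hR : Measurable R)
    (hRtail : ∀ x : ℝ, 1 ≤ x → (P {ω | x < R ω}).toReal = x ^ (-γ))
    (hRlow : ∀ x : ℝ, x < 1 → (P {ω | x < R ω}).toReal = 1) {x : ℝ} (hx : 1 ≤ x) (z : ℝ) :
    P {ω | x < R ω * z} = ENNReal.ofReal (x ^ (-γ) * min (max z 0) x ^ γ) := by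
  have hx0 : 0 < x := one_pos.trans_le hx
  rcases le_or_gt z 0 with hz | hz
  · rw [max_eq_right hz, min_eq_left hx0.le, zero_rpow hγ.ne', mul_zero, ENNReal.ofReal_zero]
    refine measure_mono_null ?_ (ae_iff.1 (ae_pos_of_pareto hR hRlow))
    intro ω (hω : x < R ω * z) (hRω : 0 < R ω)
    linarith [mul_nonpos_of_nonneg_of_nonpos hRω.le hz]
  have hset : {ω | x < R ω * z} = {ω | x / z < R ω} := by
    ext ω
    exact (div_lt_iff₀ hz).symm
  rw [max_eq_left hz.le, hset, ← ENNReal.ofReal_toReal (measure_ne_top P _)]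
  rcases le_or_gt z x with hzx | hxz
  · rw [min_eq_left hzx, hRtail _ ((one_le_div hz).2 hzx), div_rpow hx0.le hz.le, rpow_neg hz.le,
      div_eq_mul_inv, inv_inv]
  · rw [min_eq_right hxz.le, ← rpow_add hx0, neg_add_cancel, rpow_zero,
      hRlow _ ((div_lt_one hz).2 hxz)]

lemma measure_lt_mul_of_pareto (hγ : 0 < γ) (hR : Measurable R) {V : Ω → ℝ} (hV : Measurable V)
    (hRV : IndepFun R V P) (hRtail : ∀ x : ℝ, 1 ≤ x → (P {ω | x < R ω}).toReal = x ^ (-γ))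
    (hRlow : ∀ x : ℝ, x < 1 → (P {ω | x < R ω}).toReal = 1) {x : ℝ} (hx : 1 ≤ x) :
    P {ω | x < R ω * V ω}
      = ENNReal.ofReal (x ^ (-γ)) * ∫⁻ z, ENNReal.ofReal (min (max z 0) x ^ γ) ∂(P.map V) := by
  have hset : MeasurableSet {p : ℝ × ℝ | x < p.2 * p.1} :=
    measurableSet_lt measurable_const (measurable_snd.mul measurable_fst)
  have hlaw : P.map (fun ω => (V ω, R ω)) = (P.map V).prod (P.map R) :=
    (indepFun_iff_map_prod_eq_prod_map_map hV.aemeasurable hR.aemeasurable).1 hRV.symm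
  calc P {ω | x < R ω * V ω} = P.map (fun ω => (V ω, R ω)) {p | x < p.2 * p.1} := by
        rw [Measure.map_apply (hV.prodMk hR) hset]; rfl
    _ = ∫⁻ z, P {ω | x < R ω * z} ∂(P.map V) := by
        rw [hlaw, Measure.prod_apply hset]
        refine lintegral_congr fun z => ?_
        rw [Measure.map_apply hR (hset.preimage measurable_prodMk_left)]
        rfl
    _ = _ := by
        simp_rw [measure_lt_mul_const_of_pareto hγ hR hRtail hRlow hx,
          ENNReal.ofReal_mul (rpow_nonneg (zero_le_one.trans hx) _)]
        exact lintegral_const_mul _ (by fun_prop)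

lemma tendsto_measure_lt_mul_div_of_pareto (hγ : 0 < γ) (hR : Measurable R) {V V' : Ω → ℝ}
    (hV : Measurable V) (hV' : Measurable V') (hRV : IndepFun R V P) (hRV' : IndepFun R V' P)
    (hRtail : ∀ x : ℝ, 1 ≤ x → (P {ω | x < R ω}).toReal = x ^ (-γ))
    (hRlow : ∀ x : ℝ, x < 1 → (P {ω | x < R ω}).toReal = 1)
    (hVfin : ∫⁻ z, ENNReal.ofReal (max z 0 ^ γ) ∂(P.map V) ≠ ∞)
    (hV'fin : ∫⁻ z, ENNReal.ofReal (max z 0 ^ γ) ∂(P.map V') ≠ ∞)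
    (hV'pos : ∫⁻ z, ENNReal.ofReal (max z 0 ^ γ) ∂(P.map V') ≠ 0) :
    Tendsto (fun x : ℝ => (P {ω | x < R ω * V ω}).toReal / (P {ω | x < R ω * V' ω}).toReal)
      atTop (𝓝 ((∫⁻ z, ENNReal.ofReal (max z 0 ^ γ) ∂(P.map V)).toReal /
        (∫⁻ z, ENNReal.ofReal (max z 0 ^ γ) ∂(P.map V')).toReal)) := by
  have hlim {ν : Measure ℝ} (hfin : ∫⁻ z, ENNReal.ofReal (max z 0 ^ γ) ∂ν ≠ ∞) :=
    (ENNReal.tendsto_toReal hfin).comp (tendsto_lintegral_min_rpow hγ.le hfin)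
  refine ((hlim hVfin).div (hlim hV'fin) (ENNReal.toReal_ne_zero.2 ⟨hV'pos, hV'fin⟩)).congr' ?_
  filter_upwards [eventually_ge_atTop 1] with x hx
  rw [Pi.div_apply, Function.comp_apply, Function.comp_apply,
    measure_lt_mul_of_pareto hγ hR hV hRV hRtail hRlow hx,
    measure_lt_mul_of_pareto hγ hR hV' hRV' hRtail hRlow hx, ENNReal.toReal_mul,
    ENNReal.toReal_mul, ENNReal.toReal_ofReal (by positivity),
    mul_div_mul_left _ _ (by positivity)]

end Pareto

lemma lintegral_gaussianReal_eq_lintegral_gaussianPDF_mul {μ : ℝ} {v : ℝ≥0} (hv : v ≠ 0)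
    {g : ℝ → ℝ≥0∞} (hg : Measurable g) :
    ∫⁻ z, g z ∂(gaussianReal μ v) = ∫⁻ z, gaussianPDF μ v z * g z := by
  rw [gaussianReal_of_var_ne_zero _ hv,
    lintegral_withDensity_eq_lintegral_mul _ (measurable_gaussianPDF _ _) hg]
  rfl

lemma gaussianPDF_mul_gaussianPDF_comm {ρ : ℝ} {v : ℝ≥0} (hv : (v : ℝ) = 1 - ρ ^ 2)
    (hv0 : v ≠ 0) (z y : ℝ) :
    gaussianPDF 0 1 z * gaussianPDF (ρ * z) v y
      = gaussianPDF 0 1 y * gaussianPDF (ρ * y) v z := by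
  have hρ : 1 - ρ ^ 2 ≠ 0 := hv ▸ NNReal.coe_ne_zero.2 hv0
  simp only [gaussianPDF, ← ENNReal.ofReal_mul (gaussianPDFReal_nonneg _ _ _)]
  congr 1
  simp only [gaussianPDFReal, hv, NNReal.coe_one, mul_mul_mul_comm _ (rexp _), ← exp_add]
  congr 2
  field_simp
  ring

lemma lintegral_lintegral_gaussianReal_comm {ρ : ℝ} {v : ℝ≥0} (hv : (v : ℝ) = 1 - ρ ^ 2)
    (hv0 : v ≠ 0) {f : ℝ → ℝ → ℝ≥0∞} (hf : Measurable (Function.uncurry f)) :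
    ∫⁻ z, ∫⁻ y, f z y ∂(gaussianReal (ρ * z) v) ∂(gaussianReal 0 1)
      = ∫⁻ y, ∫⁻ z, f z y ∂(gaussianReal (ρ * y) v) ∂(gaussianReal 0 1) := by
  have hpdf : Measurable fun p : ℝ × ℝ => gaussianPDF (ρ * p.1) v p.2 :=
    measurable_uncurry_gaussianPDF.comp (f := fun p : ℝ × ℝ => (ρ * p.1, v, p.2)) (by fun_prop)
  have hdensity {g : ℝ → ℝ → ℝ≥0∞} (hg : Measurable (Function.uncurry g)) :
      ∫⁻ z, ∫⁻ y, g z y ∂(gaussianReal (ρ * z) v) ∂(gaussianReal 0 1)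
        = ∫⁻ z, ∫⁻ y, gaussianPDF 0 1 z * gaussianPDF (ρ * z) v y * g z y := by
    have hjoint : Measurable (Function.uncurry fun z y => gaussianPDF (ρ * z) v y * g z y) :=
      hpdf.mul hg
    rw [lintegral_congr fun z =>
        lintegral_gaussianReal_eq_lintegral_gaussianPDF_mul hv0 hg.of_uncurry_left,
      lintegral_gaussianReal_eq_lintegral_gaussianPDF_mul one_ne_zero
        hjoint.lintegral_prod_right]
    simp_rw [mul_assoc]
    exact lintegral_congr fun z => (lintegral_const_mul _ hjoint.of_uncurry_left).symm
  rw [hdensity hf, hdensity (g := fun y z => f z y) (hf.comp measurable_swap),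
    lintegral_lintegral_swap]
  · simp_rw [gaussianPDF_mul_gaussianPDF_comm hv hv0]
  · exact ((((measurable_gaussianPDF 0 1).comp measurable_fst).mul hpdf).mul hf).aemeasurable

lemma gaussianReal_map_const_add_sqrt_mul {ρ : ℝ} {v : ℝ≥0} (hv : (v : ℝ) = 1 - ρ ^ 2) (z : ℝ) :
    (gaussianReal 0 1).map (fun w => ρ * z + √(1 - ρ ^ 2) * w) = gaussianReal (ρ * z) v := by
  have hcomp : (fun w => ρ * z + √(1 - ρ ^ 2) * w) = (ρ * z + ·) ∘ (√(1 - ρ ^ 2) * ·) := rfl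
  rw [hcomp, ← Measure.map_map (measurable_const_add _) (measurable_const_mul _),
    gaussianReal_map_const_mul, gaussianReal_map_const_add]
  congr 1
  · simp
  · ext
    simp [sq_sqrt (hv ▸ v.2 : (0 : ℝ) ≤ 1 - ρ ^ 2), hv]

lemma lintegral_prod_gaussianReal_eq_lintegral_lintegral {ρ : ℝ} {v : ℝ≥0}
    (hv : (v : ℝ) = 1 - ρ ^ 2) {f : ℝ → ℝ → ℝ≥0∞} (hf : Measurable (Function.uncurry f)) :
    ∫⁻ p, f p.1 (ρ * p.1 + √(1 - ρ ^ 2) * p.2) ∂((gaussianReal 0 1).prod (gaussianReal 0 1))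
      = ∫⁻ z, ∫⁻ y, f z y ∂(gaussianReal (ρ * z) v) ∂(gaussianReal 0 1) := by
  have hmeas : Measurable fun p : ℝ × ℝ => f p.1 (ρ * p.1 + √(1 - ρ ^ 2) * p.2) :=
    hf.comp (f := fun p : ℝ × ℝ => (p.1, ρ * p.1 + √(1 - ρ ^ 2) * p.2)) (by fun_prop)
  rw [lintegral_prod _ hmeas.aemeasurable]
  refine lintegral_congr fun z => ?_
  rw [← gaussianReal_map_const_add_sqrt_mul hv z,
    lintegral_map hf.of_uncurry_left (by fun_prop)]

lemma gaussianReal_Ioi_self {ρ : ℝ} {v : ℝ≥0} (hv : (v : ℝ) = 1 - ρ ^ 2) (hv0 : v ≠ 0)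
    (z : ℝ) :
    gaussianReal (ρ * z) v (Ioi z) = gaussianReal 0 1 (Ioi ((1 - ρ) / √(1 - ρ ^ 2) * z)) := by
  have hb : 0 < √(1 - ρ ^ 2) := sqrt_pos.2 (hv ▸ NNReal.coe_pos.2 (pos_iff_ne_zero.2 hv0))
  rw [← gaussianReal_map_const_add_sqrt_mul hv z,
    Measure.map_apply (by fun_prop) measurableSet_Ioi]
  congr 1
  ext w
  simp only [mem_preimage, mem_Ioi, div_mul_eq_mul_div, div_lt_iff₀ hb]
  constructor <;> intro h <;> linarith

lemma lintegral_lintegral_gaussianReal_min {ρ : ℝ} {v : ℝ≥0} (hv : (v : ℝ) = 1 - ρ ^ 2)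
    (hv0 : v ≠ 0) {h : ℝ → ℝ≥0∞} (hh : Measurable h) :
    ∫⁻ z, ∫⁻ y, h (min z y) ∂(gaussianReal (ρ * z) v) ∂(gaussianReal 0 1)
      = 2 * ∫⁻ z, h z * gaussianReal 0 1 (Ioi ((1 - ρ) / √(1 - ρ ^ 2) * z))
          ∂(gaussianReal 0 1) := by
  set a := (1 - ρ) / √(1 - ρ ^ 2)
  have hsplit (z y : ℝ) :
      h (min z y) = (Ici z).indicator (fun _ => h z) y + (Iio z).indicator h y := by
    rcases le_or_gt z y with hzy | hyz
    · simp [hzy, not_lt.2 hzy]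
    · simp [min_eq_right hyz.le, hyz, not_le.2 hyz]
  have hinner (z : ℝ) : ∫⁻ y, h (min z y) ∂(gaussianReal (ρ * z) v)
      = h z * gaussianReal 0 1 (Ioi (a * z))
        + ∫⁻ y, (Iio z).indicator h y ∂(gaussianReal (ρ * z) v) := by
    have hatom : gaussianReal (ρ * z) v {z} = 0 :=
      gaussianReal_absolutelyContinuous _ hv0 volume_singleton
    rw [lintegral_congr (hsplit z),
      lintegral_add_left (measurable_const.indicator measurableSet_Ici), lintegral_indicator_const measurableSet_Ici, measure_congr (Ioi_ae_eq_Ici' hatom).symm,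
      gaussianReal_Ioi_self hv hv0]
  have hfirst : Measurable fun z => h z * gaussianReal 0 1 (Ioi (a * z)) :=
    hh.mul ((Antitone.measurable fun _ _ hcd => measure_mono (Ioi_subset_Ioi hcd)).comp
      (measurable_const_mul a))
  have hbelow : Measurable (Function.uncurry fun z y => (Iio z).indicator h y) :=
    (hh.comp measurable_snd).indicator (measurableSet_lt measurable_snd measurable_fst)
  rw [lintegral_congr hinner, lintegral_add_left hfirst,
    lintegral_lintegral_gaussianReal_comm hv hv0 hbelow, two_mul]
  congr 1
  refine lintegral_congr fun y => ?_
  have hind : (fun z => (Iio z).indicator h y) = (Ioi y).indicator fun _ => h y := by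
    ext z
    by_cases hyz : y < z <;> simp [hyz]
  rw [hind, lintegral_indicator_const measurableSet_Ioi, gaussianReal_Ioi_self hv hv0]

lemma gaussianPDFReal_zero_one (z : ℝ) :
    gaussianPDFReal 0 1 z = (√(2 * π))⁻¹ * exp (-2⁻¹ * z ^ 2) := by
  simp only [gaussianPDFReal, NNReal.coe_one, mul_one, sub_zero]
  ring_nf

lemma gaussianPDFReal_mul_gaussianPDFReal_mul (z t : ℝ) :
    gaussianPDFReal 0 1 z * gaussianPDFReal 0 1 (z * t)
      = (2 * π)⁻¹ * exp (-((1 + t ^ 2) / 2) * z ^ 2) := by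
  rw [gaussianPDFReal_zero_one, gaussianPDFReal_zero_one, mul_mul_mul_comm, ← mul_inv,
    mul_self_sqrt (by positivity), ← exp_add]
  ring_nf

lemma lintegral_Ioi_const_mul_rpow_mul_exp_neg_mul_sq {c s b : ℝ} (hc : 0 ≤ c) (hs : -1 < s)
    (hb : 0 < b) :
    ∫⁻ z in Ioi 0, ENNReal.ofReal (c * (z ^ s * exp (-b * z ^ 2)))
      = ENNReal.ofReal (c * (b ^ (-(s + 1) / 2) * (1 / 2) * Gamma ((s + 1) / 2))) := by
  have hnonneg : 0 ≤ᵐ[volume.restrict (Ioi 0)] fun z : ℝ => c * (z ^ s * exp (-b * z ^ 2)) := by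
    filter_upwards [ae_restrict_mem measurableSet_Ioi] with z (hz : 0 < z)
    positivity
  rw [← ofReal_integral_eq_lintegral_ofReal
      ((integrableOn_rpow_mul_exp_neg_mul_sq hb hs).const_mul c) hnonneg,
    integral_const_mul, ← integral_rpow_mul_exp_neg_mul_rpow two_pos hs hb]
  simp_rw [rpow_two]

lemma setLIntegral_Ioi_mul_left {f : ℝ → ℝ≥0∞} (hf : Measurable f) {z : ℝ} (hz : 0 < z)
    (c : ℝ) : ∫⁻ w in Ioi (z * c), f w = ENNReal.ofReal z * ∫⁻ t in Ioi c, f (z * t) := by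
  have hpre : (z * ·) ⁻¹' Ioi (z * c) = Ioi c := by
    ext t
    exact mul_lt_mul_iff_right₀ hz
  rw [← hpre, ← setLIntegral_map measurableSet_Ioi hf (measurable_const_mul z),
    map_volume_mul_left hz.ne', Measure.restrict_smul, lintegral_smul_measure, smul_eq_mul,
    abs_of_pos (inv_pos.2 hz), ← mul_assoc, ← ENNReal.ofReal_mul hz.le, mul_inv_cancel₀ hz.ne',
    ENNReal.ofReal_one, one_mul]

lemma lintegral_posPart_rpow_mul_gaussianReal {γ : ℝ} (hγ : 0 < γ) {g : ℝ → ℝ≥0∞}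
    (hg : Measurable g) :
    ∫⁻ z, ENNReal.ofReal (max z 0 ^ γ) * g z ∂(gaussianReal 0 1)
      = ∫⁻ z in Ioi 0, gaussianPDF 0 1 z * (ENNReal.ofReal (z ^ γ) * g z) := by
  rw [← lintegral_indicator measurableSet_Ioi,
    lintegral_gaussianReal_eq_lintegral_gaussianPDF_mul one_ne_zero (by fun_prop)]
  refine lintegral_congr fun z => ?_
  rcases le_or_gt z 0 with hz | hz
  · rw [indicator_of_notMem (notMem_Ioi.2 hz), max_eq_right hz, zero_rpow hγ.ne',
      ENNReal.ofReal_zero, zero_mul, mul_zero]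
  · rw [indicator_of_mem (mem_Ioi.2 hz), max_eq_left hz.le]

lemma lintegral_posPart_rpow_gaussianReal {γ : ℝ} (hγ : 0 < γ) :
    ∫⁻ z, ENNReal.ofReal (max z 0 ^ γ) ∂(gaussianReal 0 1)
      = ENNReal.ofReal ((√(2 * π))⁻¹ * (2⁻¹ ^ (-(γ + 1) / 2) * (1 / 2) * Gamma ((γ + 1) / 2))) := by
  have h := lintegral_posPart_rpow_mul_gaussianReal hγ measurable_one
  simp only [Pi.one_apply, mul_one] at h
  rw [h, ← lintegral_Ioi_const_mul_rpow_mul_exp_neg_mul_sq (by positivity) (by linarith)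
    (by norm_num)]
  refine setLIntegral_congr_fun measurableSet_Ioi fun z (hz : 0 < z) => ?_
  rw [gaussianPDF, gaussianPDFReal_zero_one, ← ENNReal.ofReal_mul (by positivity)]
  congr 1
  ring

lemma toReal_lintegral_posPart_rpow_gaussianReal_pos {γ : ℝ} (hγ : 0 < γ) :
    0 < (∫⁻ z, ENNReal.ofReal (max z 0 ^ γ) ∂(gaussianReal 0 1)).toReal := by
  have := Gamma_pos_of_pos (by linarith : 0 < (γ + 1) / 2)
  rw [lintegral_posPart_rpow_gaussianReal hγ, ENNReal.toReal_ofReal (by positivity)]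
  positivity

lemma gaussianPDF_mul_rpow_mul_gaussianReal_Ioi {γ : ℝ} (a : ℝ) {z : ℝ} (hz : 0 < z) :
    gaussianPDF 0 1 z * (ENNReal.ofReal (z ^ γ) * gaussianReal 0 1 (Ioi (a * z)))
      = ∫⁻ t in Ioi a,
          ENNReal.ofReal ((2 * π)⁻¹ * (z ^ (γ + 1) * exp (-((1 + t ^ 2) / 2) * z ^ 2))) := by
  rw [gaussianReal_apply 0 one_ne_zero, mul_comm a z,
    setLIntegral_Ioi_mul_left (measurable_gaussianPDF 0 1) hz, ← mul_assoc, ← mul_assoc,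
    ← lintegral_const_mul _ (by fun_prop)]
  refine lintegral_congr fun t => ?_
  have hφ := gaussianPDFReal_nonneg 0 1 z
  simp only [gaussianPDF]
  rw [← ENNReal.ofReal_mul hφ, ← ENNReal.ofReal_mul (mul_nonneg hφ (by positivity)),
    ← ENNReal.ofReal_mul (mul_nonneg (mul_nonneg hφ (by positivity)) hz.le)]
  congr 1
  rw [rpow_add_one hz.ne']
  linear_combination (z ^ γ * z) * gaussianPDFReal_mul_gaussianPDFReal_mul z t

lemma lintegral_posPart_rpow_mul_gaussianReal_Ioi_eq_integral {γ : ℝ} (hγ : 0 < γ) (a : ℝ) :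
    ∫⁻ z, ENNReal.ofReal (max z 0 ^ γ) * gaussianReal 0 1 (Ioi (a * z)) ∂(gaussianReal 0 1)
      = ENNReal.ofReal ((2 * π)⁻¹ * (2⁻¹ ^ (-(γ + 1 + 1) / 2) * (1 / 2) * Gamma ((γ + 1 + 1) / 2))
          * ∫ t in Ioi a, (1 + t ^ 2) ^ (-(γ + 1 + 1) / 2)) := by
  set C := (2 * π)⁻¹ * (2⁻¹ ^ (-(γ + 1 + 1) / 2) * (1 / 2) * Gamma ((γ + 1 + 1) / 2))
  have hC : 0 ≤ C := by
    have := Gamma_pos_of_pos (by linarith : 0 < (γ + 1 + 1) / 2)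
    positivity
  have hanti : Measurable fun z => gaussianReal 0 1 (Ioi (a * z)) :=
    (Antitone.measurable fun _ _ hcd => measure_mono (Ioi_subset_Ioi hcd)).comp
      (measurable_const_mul a)
  have hradial (t : ℝ) :
      ∫⁻ z in Ioi 0, ENNReal.ofReal ((2 * π)⁻¹ * (z ^ (γ + 1) * exp (-((1 + t ^ 2) / 2) * z ^ 2)))
        = ENNReal.ofReal C * ENNReal.ofReal ((1 + t ^ 2) ^ (-(γ + 1 + 1) / 2)) := by
    rw [lintegral_Ioi_const_mul_rpow_mul_exp_neg_mul_sq (by positivity) (by linarith)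
      (by positivity), ← ENNReal.ofReal_mul hC, div_eq_inv_mul (1 + t ^ 2),
      mul_rpow (by norm_num) (by positivity)]
    congr 1
    ring
  have hint : IntegrableOn (fun t : ℝ => (1 + t ^ 2) ^ (-(γ + 1 + 1) / 2)) (Ioi a) := by
    have h := integrable_rpow_neg_one_add_norm_sq (E := ℝ) (μ := volume) (r := γ + 1 + 1)
      (by simp; linarith)
    simpa only [norm_eq_abs, sq_abs] using h.integrableOn
  rw [lintegral_posPart_rpow_mul_gaussianReal hγ hanti,
    setLIntegral_congr_fun measurableSet_Ioi fun z hz =>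
      gaussianPDF_mul_rpow_mul_gaussianReal_Ioi a hz,
    lintegral_lintegral_swap (by fun_prop), lintegral_congr hradial,
    lintegral_const_mul _ (by fun_prop), ENNReal.ofReal_mul hC,
    ofReal_integral_eq_lintegral_ofReal hint
      (ae_of_all _ fun t => rpow_nonneg (by positivity) _)]

lemma studentTSurvival_nonneg {d : ℝ} (hd : 0 < d) (x : ℝ) : 0 ≤ studentTSurvival d x :=
  setIntegral_nonneg measurableSet_Ioi fun u _ => by
    have := Gamma_pos_of_pos (by positivity : 0 < (d + 1) / 2)
    have := Gamma_pos_of_pos (by positivity : 0 < d / 2)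
    unfold studentTPdf
    positivity

lemma studentTSurvival_sqrt_mul {d : ℝ} (hd : 0 < d) (a : ℝ) :
    studentTSurvival d (√d * a)
      = Gamma ((d + 1) / 2) / (√π * Gamma (d / 2))
        * ∫ t in Ioi a, (1 + t ^ 2) ^ (-(d + 1) / 2) := by
  have hsd : 0 < √d := sqrt_pos.2 hd
  have hscale : studentTSurvival d (√d * a) = √d * ∫ t in Ioi a, studentTPdf d (√d * t) := by
    rw [integral_comp_mul_left_Ioi _ _ hsd, smul_eq_mul, mul_inv_cancel_left₀ hsd.ne',
      studentTSurvival]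
  rw [hscale, ← integral_const_mul, ← integral_const_mul]
  refine setIntegral_congr_fun measurableSet_Ioi fun t _ => ?_
  rw [studentTPdf, mul_pow, sq_sqrt hd.le, mul_div_cancel_left₀ _ hd.ne', sqrt_mul hd.le,
    neg_div]
  field_simp

lemma lintegral_posPart_rpow_mul_gaussianReal_Ioi {γ : ℝ} (hγ : 0 < γ) (a : ℝ) :
    ∫⁻ z, ENNReal.ofReal (max z 0 ^ γ) * gaussianReal 0 1 (Ioi (a * z)) ∂(gaussianReal 0 1)
      = (∫⁻ z, ENNReal.ofReal (max z 0 ^ γ) ∂(gaussianReal 0 1))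
        * ENNReal.ofReal (studentTSurvival (γ + 1) (√(γ + 1) * a)) := by
  have hΓ := Gamma_pos_of_pos (by linarith : 0 < (γ + 1) / 2)
  have h2 : (2⁻¹ : ℝ) ^ (-(γ + 1 + 1) / 2) = 2⁻¹ ^ (-(γ + 1) / 2) * √2 := by
    rw [show -(γ + 1 + 1) / 2 = -(γ + 1) / 2 + -(1 / 2) by ring, rpow_add (by norm_num),
      rpow_neg (by norm_num), ← sqrt_eq_rpow, sqrt_inv, inv_inv]
  rw [lintegral_posPart_rpow_mul_gaussianReal_Ioi_eq_integral hγ a,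
    lintegral_posPart_rpow_gaussianReal hγ, studentTSurvival_sqrt_mul (by linarith) a,
    ← ENNReal.ofReal_mul (by positivity), h2, sqrt_mul zero_le_two π]
  congr 1
  field_simp
  rw [sq_sqrt zero_le_two, sq_sqrt pi_pos.le]
  ring

lemma one_sub_div_sqrt_one_sub_sq {ρ : ℝ} (hρ₁ : -1 < ρ) (hρ₂ : ρ < 1) :
    (1 - ρ) / √(1 - ρ ^ 2) = √((1 - ρ) / (1 + ρ)) := by
  have h1 : 0 < 1 + ρ := by linarith
  have h2 : 0 < 1 - ρ := by linarith
  have h3 : 0 < 1 - ρ ^ 2 := by nlinarith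
  have hsq : (1 - ρ) / (1 + ρ) = (1 - ρ) ^ 2 / (1 - ρ ^ 2) := by
    rw [div_eq_div_iff h1.ne' h3.ne']
    ring
  rw [hsq, sqrt_div' _ h3.le, sqrt_sq h2.le]

lemma lintegral_posPart_rpow_min_gaussianReal_prod {γ ρ : ℝ} (hγ : 0 < γ) (hρ₁ : -1 < ρ)
    (hρ₂ : ρ < 1) :
    ∫⁻ p : ℝ × ℝ, ENNReal.ofReal (max (min p.1 (ρ * p.1 + √(1 - ρ ^ 2) * p.2)) 0 ^ γ)
        ∂((gaussianReal 0 1).prod (gaussianReal 0 1))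
      = 2 * (∫⁻ z, ENNReal.ofReal (max z 0 ^ γ) ∂(gaussianReal 0 1))
        * ENNReal.ofReal (studentTSurvival (γ + 1) √((γ + 1) * (1 - ρ) / (1 + ρ))) := by
  have hv : 0 < 1 - ρ ^ 2 := by nlinarith
  rw [lintegral_prod_gaussianReal_eq_lintegral_lintegral (v := (1 - ρ ^ 2).toNNReal)
      (coe_toNNReal _ hv.le) (f := fun z y => ENNReal.ofReal (max (min z y) 0 ^ γ)) (by fun_prop),
    lintegral_lintegral_gaussianReal_min (coe_toNNReal _ hv.le) (toNNReal_pos.2 hv).ne'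
      (h := fun z => ENNReal.ofReal (max z 0 ^ γ)) (by fun_prop),
    lintegral_posPart_rpow_mul_gaussianReal_Ioi hγ, one_sub_div_sqrt_one_sub_sq hρ₁ hρ₂,
    ← sqrt_mul (by linarith), mul_div_assoc, mul_assoc]

lemma map_mul_add_sqrt_mul_eq_gaussianReal {Ω : Type*} [MeasurableSpace Ω] {P : Measure Ω}
    {X Y : Ω → ℝ} (hX : Measurable X) (hY : Measurable Y) (hXlaw : P.map X = gaussianReal 0 1)
    (hYlaw : P.map Y = gaussianReal 0 1) (hXY : IndepFun X Y P) {ρ : ℝ} (hρ : ρ ^ 2 ≤ 1) :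
    P.map (fun ω => ρ * X ω + √(1 - ρ ^ 2) * Y ω) = gaussianReal 0 1 := by
  have h := gaussianReal_add_gaussianReal_of_indepFun
    (hXY.comp (measurable_const_mul ρ) (measurable_const_mul √(1 - ρ ^ 2)))
    (gaussianReal_const_mul ⟨hX.aemeasurable, hXlaw⟩ ρ).map_eq
    (gaussianReal_const_mul ⟨hY.aemeasurable, hYlaw⟩ √(1 - ρ ^ 2)).map_eq
  convert h using 2
  · rfl
  · simp
  · apply NNReal.eq
    simp [sq_sqrt (sub_nonneg.2 hρ)]

lemma lintegral_posPart_rpow_map_min {Ω : Type*} [MeasurableSpace Ω] {P : Measure Ω}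
    [IsFiniteMeasure P] {Z₁ Z₀ : Ω → ℝ} (hZ₁meas : Measurable Z₁) (hZ₀meas : Measurable Z₀)
    (hZ₁ : P.map Z₁ = gaussianReal 0 1) (hZ₀ : P.map Z₀ = gaussianReal 0 1)
    (hZindep : IndepFun Z₁ Z₀ P) {γ ρ : ℝ} (hγ : 0 < γ) (hρ₁ : -1 < ρ) (hρ₂ : ρ < 1) :
    ∫⁻ z, ENNReal.ofReal (max z 0 ^ γ) ∂(P.map fun ω => min (Z₁ ω) (ρ * Z₁ ω + √(1 - ρ ^ 2) * Z₀ ω))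
      = 2 * (∫⁻ z, ENNReal.ofReal (max z 0 ^ γ) ∂(gaussianReal 0 1))
        * ENNReal.ofReal (studentTSurvival (γ + 1) √((γ + 1) * (1 - ρ) / (1 + ρ))) := by
  have hmin : Measurable fun p : ℝ × ℝ => min p.1 (ρ * p.1 + √(1 - ρ ^ 2) * p.2) := by fun_prop
  rw [show (fun ω => min (Z₁ ω) (ρ * Z₁ ω + √(1 - ρ ^ 2) * Z₀ ω))
      = (fun p : ℝ × ℝ => min p.1 (ρ * p.1 + √(1 - ρ ^ 2) * p.2)) ∘ fun ω => (Z₁ ω, Z₀ ω) from rfl,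
    ← Measure.map_map hmin (hZ₁meas.prodMk hZ₀meas),
    (indepFun_iff_map_prod_eq_prod_map_map hZ₁meas.aemeasurable hZ₀meas.aemeasurable).1 hZindep,
    hZ₁, hZ₀, lintegral_map (by fun_prop) hmin]
  exact lintegral_posPart_rpow_min_gaussianReal_prod hγ hρ₁ hρ₂

/-- (χ of the HOT model when β = 0.) Let `Z₁, Z₀` be independent
standard normals, `Z₂ = ρ Z₁ + √(1-ρ²) Z₀` for ρ ∈ (-1,1), and let `R` be Pareto(γ)
(γ > 0), independent of `(Z₁, Z₀)`. With `W i = R·Z i`,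
`P(W₁ > x and W₂ > x) / P(W₂ > x) → 2·T̄_{γ+1}(√((γ+1)(1-ρ)/(1+ρ)))` as `x → ∞`. -/
theorem hot_model_chi_AD
    {Ω : Type*} [MeasurableSpace Ω] (P : Measure Ω) [IsProbabilityMeasure P]
    (γ ρ : ℝ) (hγ : 0 < γ) (hρ₁ : -1 < ρ) (hρ₂ : ρ < 1)
    (Z₁ Z₀ R : Ω → ℝ)
    (hZ₁meas : Measurable Z₁) (hZ₀meas : Measurable Z₀) (hRmeas : Measurable R)
    (hZ₁ : Measure.map Z₁ P = gaussianReal 0 1)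
    (hZ₀ : Measure.map Z₀ P = gaussianReal 0 1)
    (hZindep : IndepFun Z₁ Z₀ P)
    (hRindep : IndepFun R (fun ω => (Z₁ ω, Z₀ ω)) P)
    (hRtail : ∀ x : ℝ, 1 ≤ x → (P {ω | x < R ω}).toReal = x ^ (-γ))
    (hRlow : ∀ x : ℝ, x < 1 → (P {ω | x < R ω}).toReal = 1)
    (Z₂ W₁ W₂ : Ω → ℝ)
    (hZ₂ : ∀ ω, Z₂ ω = ρ * Z₁ ω + Real.sqrt (1 - ρ ^ 2) * Z₀ ω)
    (hW₁ : ∀ ω, W₁ ω = R ω * Z₁ ω) (hW₂ : ∀ ω, W₂ ω = R ω * Z₂ ω) :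
    Tendsto (fun x : ℝ =>
        (P {ω | x < W₁ ω ∧ x < W₂ ω}).toReal / (P {ω | x < W₂ ω}).toReal)
      atTop
      (nhds (2 * studentTSurvival (γ + 1) (Real.sqrt ((γ + 1) * (1 - ρ) / (1 + ρ))))) := by
  obtain rfl : Z₂ = fun ω => ρ * Z₁ ω + √(1 - ρ ^ 2) * Z₀ ω := funext hZ₂
  obtain rfl : W₁ = fun ω => R ω * Z₁ ω := funext hW₁
  obtain rfl : W₂ = fun ω => R ω * (ρ * Z₁ ω + √(1 - ρ ^ 2) * Z₀ ω) := funext hW₂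
  have hZ₂law := map_mul_add_sqrt_mul_eq_gaussianReal hZ₁meas hZ₀meas hZ₁ hZ₀ hZindep
    (by nlinarith : ρ ^ 2 ≤ 1)
  have hVmoment := lintegral_posPart_rpow_map_min hZ₁meas hZ₀meas hZ₁ hZ₀ hZindep hγ hρ₁ hρ₂
  obtain ⟨hCpos, hCfin⟩ :=
    ENNReal.toReal_pos_iff.1 (toReal_lintegral_posPart_rpow_gaussianReal_pos hγ)
  have hlim := tendsto_measure_lt_mul_div_of_pareto hγ hRmeas
    (V := fun ω => min (Z₁ ω) (ρ * Z₁ ω + √(1 - ρ ^ 2) * Z₀ ω))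
    (V' := fun ω => ρ * Z₁ ω + √(1 - ρ ^ 2) * Z₀ ω) (by fun_prop) (by fun_prop)
    (hRindep.comp measurable_id (by fun_prop : Measurable fun p : ℝ × ℝ =>
      min p.1 (ρ * p.1 + √(1 - ρ ^ 2) * p.2)))
    (hRindep.comp measurable_id (by fun_prop : Measurable fun p : ℝ × ℝ =>
      ρ * p.1 + √(1 - ρ ^ 2) * p.2)) hRtail hRlow
    (by rw [hVmoment]; finiteness) (hZ₂law ▸ hCfin.ne) (hZ₂law ▸ hCpos.ne')
  rw [hVmoment, hZ₂law, ENNReal.toReal_mul, ENNReal.toReal_mul, ENNReal.toReal_ofNat,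
    ENNReal.toReal_ofReal (studentTSurvival_nonneg (by linarith) _), mul_right_comm,
    mul_div_cancel_right₀ _ (ENNReal.toReal_pos hCpos.ne' hCfin.ne).ne'] at hlim
  simpa only [measure_lt_mul_and_lt_mul_eq_measure_lt_mul_min (ae_pos_of_pareto hRmeas hRlow)]
    using hlim
end
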